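/- arXiv:1412.0170 — 3 statements merged into one kernel-verified Lean document; each statement's English description precedes it below -/
import Mathlib

section
/- If φ and ψ are two differentiable convex functions on ℝ, then for any x and any y > 0: |φ'(x) − ψ'(x)| ≤ ψ'(x+y) − ψ'(x−y) + δ/y, where δ = |φ(x+y)−ψ(x+y)| + |φ(x−y)−ψ(x−y)| + |φ(x)−ψ(x)|. -/
/-! Squeeze each derivative between chord slopes: for convex `f` and `a < b`,
`f'(a) ≤ slope f a b ≤ f'(b)`. Replacing the chord slope of `φ` by that of `ψ` costs at most
`(|φ a - ψ a| + |φ b - ψ b|) / (b - a)`, so `φ'(x) ≤ ψ'(x + y) + …` and `ψ'(x - y) ≤ φ'(x) + …`;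
monotonicity of `ψ'` then turns `ψ'(x)` into `ψ'(x - y)` resp. `ψ'(x + y)`. -/

open Set

theorem abs_slope_sub_slope_le (f g : ℝ → ℝ) (a b : ℝ) :
    |slope f a b - slope g a b| ≤ (|f a - g a| + |f b - g b|) / |b - a| := by
  have hslope : slope f a b - slope g a b = ((f b - g b) - (f a - g a)) / (b - a) := by
    simp only [slope_def_field]
    ring
  rw [hslope, abs_div]
  gcongr
  exact (abs_sub _ _).trans_eq (add_comm _ _)

theorem ConvexOn.deriv_le_deriv_add_of_lt {S : Set ℝ} {φ ψ : ℝ → ℝ}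
    (hφ : ConvexOn ℝ S φ) (hψ : ConvexOn ℝ S ψ) {a b : ℝ} (ha : a ∈ S) (hb : b ∈ S) (hab : a < b)
    (hφa : DifferentiableAt ℝ φ a) (hψb : DifferentiableAt ℝ ψ b) :
    deriv φ a ≤ deriv ψ b + (|φ a - ψ a| + |φ b - ψ b|) / (b - a) := by
  have hslope := (le_abs_self _).trans (abs_slope_sub_slope_le φ ψ a b)
  rw [abs_of_pos (sub_pos.mpr hab)] at hslope
  calc deriv φ a ≤ slope φ a b := hφ.deriv_le_slope ha hb hab hφa
    _ ≤ slope ψ a b + (|φ a - ψ a| + |φ b - ψ b|) / (b - a) := by linarith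
    _ ≤ deriv ψ b + (|φ a - ψ a| + |φ b - ψ b|) / (b - a) := by
      gcongr
      exact hψ.slope_le_deriv ha hb hab hψb

/-- For differentiable convex `φ, ψ : ℝ → ℝ`, any `x` and `y > 0`,
`|φ'(x) − ψ'(x)| ≤ ψ'(x+y) − ψ'(x−y) + δ/y` with
`δ = |φ(x+y)−ψ(x+y)| + |φ(x−y)−ψ(x−y)| + |φ(x)−ψ(x)|`. -/
theorem convex_derivative_comparison (φ ψ : ℝ → ℝ)
    (hφc : ConvexOn ℝ Set.univ φ) (hψc : ConvexOn ℝ Set.univ ψ)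
    (hφd : Differentiable ℝ φ) (hψd : Differentiable ℝ ψ)
    (x y : ℝ) (hy : 0 < y) :
    |deriv φ x - deriv ψ x| ≤
      deriv ψ (x + y) - deriv ψ (x - y) +
        (|φ (x + y) - ψ (x + y)| + |φ (x - y) - ψ (x - y)| + |φ x - ψ x|) / y := by
  have hψmono := hψc.monotoneOn_deriv fun z _ ↦ hψd z
  have hleft : deriv ψ (x - y) ≤ deriv ψ x :=
    hψmono (mem_univ _) (mem_univ _) (by linarith)
  have hright : deriv ψ x ≤ deriv ψ (x + y) :=
    hψmono (mem_univ _) (mem_univ _) (by linarith)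
  have hφ_le := hφc.deriv_le_deriv_add_of_lt hψc (mem_univ x) (mem_univ (x + y))
    (by linarith) (hφd x) (hψd (x + y))
  have hψ_le := hψc.deriv_le_deriv_add_of_lt hφc (mem_univ (x - y)) (mem_univ x)
    (by linarith) (hψd (x - y)) (hφd x)
  rw [add_sub_cancel_left] at hφ_le
  rw [sub_sub_cancel, abs_sub_comm (ψ (x - y)), abs_sub_comm (ψ x)] at hψ_le
  simp only [add_div] at hφ_le hψ_le ⊢
  have h₁ : 0 ≤ |φ (x + y) - ψ (x + y)| / y := by positivity
  have h₂ : 0 ≤ |φ (x - y) - ψ (x - y)| / y := by positivity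
  rw [abs_sub_le_iff]
  constructor <;> linarith
end

section
/- Suppose a random probability measure G on a Hilbert space satisfies the Ghirlanda-Guerra identities. If A ⊆ ℝ is measurable with a = ζ(A^c) < 1, where ζ is the distribution of the overlap R_{1,2} under E G⊗², then E⟨ I(R_{1,ℓ} ∈ A^c for 2 ≤ ℓ ≤ n+1) ⟩ = a(1+a)(1+a/2)···(1+a/(n-1))/n ≤ a(1+a)/n^{1−a} for every n ≥ 2. -/
open MeasureTheory ProbabilityTheory

variable {H : Type} [NormedAddCommGroup H] [InnerProductSpace ℝ H]
  [MeasurableSpace H] [BorelSpace H]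
  {Θ : Type} [MeasurableSpace Θ]

/-- The annealed average `E ⟨f(σ¹,…,σⁿ)⟩` of a function of `n` replicas sampled i.i.d.
from the random measure `G` (a Markov kernel over the probability space `(Θ, ν)`). -/
noncomputable def EG (ν : Measure Θ) (G : ProbabilityTheory.Kernel Θ H)
    (n : ℕ) (f : (Fin n → H) → ℝ) : ℝ :=
  ∫ θ, ∫ σ, f σ ∂(Measure.pi fun _ : Fin n => G θ) ∂ν

/-- The Ghirlanda–Guerra identities for the random measure `G`: for every `n ≥ 1`, every
bounded measurable function `f` of the overlap matrix of `n` replicas and every bounded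
measurable `ψ : ℝ → ℝ`,
`E⟨f ψ(R_{1,n+1})⟩ = (1/n) E⟨f⟩ E⟨ψ(R_{1,2})⟩ + (1/n) ∑_{ℓ=2}^n E⟨f ψ(R_{1,ℓ})⟩`. -/
def SatisfiesGG (ν : Measure Θ) (G : ProbabilityTheory.Kernel Θ H) : Prop :=
  ∀ n : ℕ, ∀ f : (Fin (n + 1) → Fin (n + 1) → ℝ) → ℝ, ∀ ψ : ℝ → ℝ,
    Measurable f → Measurable ψ →
    (∃ C, ∀ x, |f x| ≤ C) → (∃ C, ∀ x, |ψ x| ≤ C) →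
    EG ν G (n + 2) (fun σ =>
        f (fun i j => (inner ℝ (σ i.castSucc) (σ j.castSucc) : ℝ)) *
          ψ ((inner ℝ (σ 0) (σ (Fin.last (n + 1))) : ℝ))) =
      (1 / (n + 1 : ℝ)) *
          EG ν G (n + 1) (fun σ => f fun i j => (inner ℝ (σ i) (σ j) : ℝ)) *
          EG ν G 2 (fun σ => ψ ((inner ℝ (σ 0) (σ 1) : ℝ))) +
        (1 / (n + 1 : ℝ)) *
          ∑ ℓ ∈ Finset.univ.erase (0 : Fin (n + 1)),
            EG ν G (n + 1) (fun σ =>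
              f (fun i j => (inner ℝ (σ i) (σ j) : ℝ)) * ψ ((inner ℝ (σ 0) (σ ℓ) : ℝ)))

/-- `ζ(A) = E G⊗²((σ¹,σ²) : σ¹·σ² ∈ A)`, the annealed distribution of one overlap. -/
noncomputable def zetaOv (ν : Measure Θ) (G : ProbabilityTheory.Kernel Θ H)
    (A : Set ℝ) : ℝ :=
  EG ν G 2 (fun σ => Set.indicator A (fun _ => (1 : ℝ)) ((inner ℝ (σ 0) (σ 1) : ℝ)))

/-!
With `f` the indicator that `R_{1,ℓ} ∈ Aᶜ` for `2 ≤ ℓ ≤ n+1` and `ψ` the indicator of `Aᶜ`, the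
Ghirlanda–Guerra identity for `n+1` replicas gives `p_{n+1} = (n + a) / (n + 1) · p_n` for
`p_n = E⟨I(R_{1,ℓ} ∈ Aᶜ, 2 ≤ ℓ ≤ n+1)⟩`: its left side is `p_{n+1}`, and each `f ψ(R_{1,ℓ})` with
`ℓ ≤ n+1` is just `f`. Since `p_0 = 1`, `p_n = a(a+1)⋯(a+n-1)/n!`. The bound
`p_n ≤ a(1+a) n^a / (n+a)` follows by induction from `1 + a/(m+1) ≤ (1 + 1/m)^a`, which is
`log(1 + 1/m) ≥ 1/(m+1)` combined with `1 + x ≤ eˣ`.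
-/

lemma one_add_div_add_one_le_rpow {a x : ℝ} (ha : 0 ≤ a) (hx : 0 < x) :
    1 + a / (x + 1) ≤ ((x + 1) / x) ^ a := by
  have hlog : 1 / (x + 1) ≤ Real.log ((x + 1) / x) := by
    convert Real.one_sub_inv_le_log_of_pos (show 0 < (x + 1) / x by positivity) using 1
    field_simp; ring
  calc 1 + a / (x + 1) ≤ Real.exp (a / (x + 1)) := by linarith [Real.add_one_le_exp (a / (x + 1))]
    _ ≤ Real.exp (Real.log ((x + 1) / x) * a) := by
        gcongr
        rw [mul_comm, ← mul_one_div]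
        exact mul_le_mul_of_nonneg_left hlog ha
    _ = ((x + 1) / x) ^ a := (Real.rpow_def_of_pos (by positivity) a).symm

noncomputable def risingDivFactorial (a : ℝ) (n : ℕ) : ℝ :=
  (∏ k ∈ Finset.range n, ((k : ℝ) + a)) / n.factorial

lemma risingDivFactorial_zero (a : ℝ) : risingDivFactorial a 0 = 1 := by
  simp [risingDivFactorial]

lemma risingDivFactorial_succ (a : ℝ) (n : ℕ) :
    risingDivFactorial a (n + 1) = (n + a) / (n + 1) * risingDivFactorial a n := by
  simp only [risingDivFactorial, Finset.prod_range_succ, Nat.factorial_succ, Nat.cast_mul]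
  push_cast
  field_simp

lemma eq_risingDivFactorial_of_succ {a : ℝ} {u : ℕ → ℝ} (h0 : u 0 = 1)
    (hsucc : ∀ n : ℕ, u (n + 1) = (n + a) / (n + 1) * u n) (n : ℕ) :
    u n = risingDivFactorial a n := by
  induction n with
  | zero => rw [h0, risingDivFactorial_zero]
  | succ n ih => rw [hsucc, ih, risingDivFactorial_succ]

lemma risingDivFactorial_le {a : ℝ} (ha : 0 ≤ a) {n : ℕ} (hn : 1 ≤ n) :
    risingDivFactorial a n ≤ a * (1 + a) * (n : ℝ) ^ a / (n + a) := by
  induction n, hn using Nat.le_induction with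
  | base =>
    rw [risingDivFactorial_succ, risingDivFactorial_zero]
    simp only [Nat.cast_zero, Nat.cast_one, zero_add, Real.one_rpow]
    field_simp
    rfl
  | succ m hm ih =>
    have hm₀ : (0 : ℝ) < m := by exact_mod_cast hm
    have hrpow := one_add_div_add_one_le_rpow ha hm₀
    rw [Real.div_rpow (by positivity) hm₀.le, le_div_iff₀ (by positivity)] at hrpow
    have hstep : (m : ℝ) ^ a / (m + 1) ≤ ((m : ℝ) + 1) ^ a / (m + 1 + a) := by
      calc (m : ℝ) ^ a / (m + 1) = (1 + a / (m + 1)) * (m : ℝ) ^ a / (m + 1 + a) := by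
            field_simp
        _ ≤ ((m : ℝ) + 1) ^ a / (m + 1 + a) := by gcongr
    calc risingDivFactorial a (m + 1)
        ≤ (m + a) / (m + 1) * (a * (1 + a) * (m : ℝ) ^ a / (m + a)) := by
          rw [risingDivFactorial_succ]; gcongr
      _ = a * (1 + a) * ((m : ℝ) ^ a / (m + 1)) := by field_simp
      _ ≤ a * (1 + a) * (((m : ℝ) + 1) ^ a / (m + 1 + a)) := by
          gcongr
      _ = a * (1 + a) * ((m + 1 : ℕ) : ℝ) ^ a / ((m + 1 : ℕ) + a) := by push_cast; ring

lemma risingDivFactorial_le_div_rpow {a : ℝ} (ha : 0 ≤ a) {n : ℕ} (hn : 1 ≤ n) :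
    risingDivFactorial a n ≤ a * (1 + a) / (n : ℝ) ^ (1 - a) := by
  have hn₀ : (0 : ℝ) < n := by exact_mod_cast hn
  calc risingDivFactorial a n ≤ a * (1 + a) * (n : ℝ) ^ a / (n + a) := risingDivFactorial_le ha hn
    _ ≤ a * (1 + a) * (n : ℝ) ^ a / n := by gcongr; linarith
    _ = a * (1 + a) / (n : ℝ) ^ (1 - a) := by
        rw [Real.rpow_sub hn₀, Real.rpow_one, div_div_eq_mul_div]

section Overlaps

omit [BorelSpace H]

/-- Replica `0` plays the role of the paper's `σ¹`. -/
def overlapsWithFirstMem (B : Set ℝ) (n : ℕ) : Set (Fin (n + 1) → H) :=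
  {σ | ∀ ℓ : Fin (n + 1), ℓ ≠ 0 → (inner ℝ (σ 0) (σ ℓ) : ℝ) ∈ B}

omit [MeasurableSpace H] in
lemma mem_overlapsWithFirstMem_succ {B : Set ℝ} {n : ℕ} {σ : Fin (n + 2) → H} :
    σ ∈ overlapsWithFirstMem B (n + 1) ↔
      (fun i => σ i.castSucc) ∈ overlapsWithFirstMem B n ∧
        (inner ℝ (σ 0) (σ (Fin.last (n + 1))) : ℝ) ∈ B := by
  simp only [overlapsWithFirstMem, Set.mem_ofPred_eq]
  conv_lhs => rw [Fin.forall_fin_succ']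
  simp [Fin.last_pos.ne']

variable (ν : Measure Θ) (G : Kernel Θ H)

noncomputable def probOverlapsWithFirstMem (B : Set ℝ) (n : ℕ) : ℝ :=
  EG ν G (n + 1) ((overlapsWithFirstMem B n).indicator fun _ => 1)

lemma zetaOv_nonneg (B : Set ℝ) : 0 ≤ zetaOv ν G B :=
  integral_nonneg fun _ => integral_nonneg fun _ => Set.indicator_nonneg (fun _ _ => zero_le_one) _

lemma probOverlapsWithFirstMem_zero [IsProbabilityMeasure ν] [IsMarkovKernel G] (B : Set ℝ) :
    probOverlapsWithFirstMem ν G B 0 = 1 := by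
  simp [probOverlapsWithFirstMem, overlapsWithFirstMem, EG]

lemma probOverlapsWithFirstMem_succ (hGG : SatisfiesGG ν G) {B : Set ℝ} (hB : MeasurableSet B)
    (n : ℕ) :
    probOverlapsWithFirstMem ν G B (n + 1) =
      (n + zetaOv ν G B) / (n + 1) * probOverlapsWithFirstMem ν G B n := by
  classical
  set f : (Fin (n + 1) → Fin (n + 1) → ℝ) → ℝ :=
    Set.indicator {Q | ∀ ℓ, ℓ ≠ 0 → Q 0 ℓ ∈ B} fun _ => 1
  set χ : ℝ → ℝ := Set.indicator B fun _ => 1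
  have hf : Measurable f := measurable_const.indicator (by measurability)
  have hχ : Measurable χ := measurable_const.indicator hB
  have hbound {α : Type} (s : Set α) : ∃ C, ∀ x, |s.indicator (fun _ => (1 : ℝ)) x| ≤ C :=
    ⟨1, fun x => by by_cases hx : x ∈ s <;> simp [hx]⟩
  have key := hGG n f χ hf hχ (hbound _) (hbound _)
  have hmean : (fun σ : Fin (n + 1) → H => f fun i j => (inner ℝ (σ i) (σ j) : ℝ)) =
      (overlapsWithFirstMem B n).indicator fun _ => 1 := rfl
  have hlhs : (fun σ : Fin (n + 2) → H =>
      f (fun i j => (inner ℝ (σ i.castSucc) (σ j.castSucc) : ℝ)) *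
        χ (inner ℝ (σ 0) (σ (Fin.last (n + 1))))) =
      (overlapsWithFirstMem B (n + 1)).indicator fun _ => 1 := by
    ext σ
    simp only [f, χ, Set.indicator_apply, ite_zero_mul_ite_zero, mul_one,
      mem_overlapsWithFirstMem_succ]
    exact if_congr Iff.rfl rfl rfl
  have hsum : ∀ ℓ₀ ∈ Finset.univ.erase (0 : Fin (n + 1)),
      (fun σ : Fin (n + 1) → H =>
        f (fun i j => (inner ℝ (σ i) (σ j) : ℝ)) * χ (inner ℝ (σ 0) (σ ℓ₀))) =
      (overlapsWithFirstMem B n).indicator fun _ => 1 := by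
    intro ℓ₀ hℓ₀
    ext σ
    simp only [f, χ, Set.indicator_apply, ite_zero_mul_ite_zero, mul_one]
    exact if_congr (and_iff_left_of_imp fun h => h ℓ₀ (Finset.ne_of_mem_erase hℓ₀)) rfl rfl
  rw [hlhs, hmean, Finset.sum_congr rfl fun ℓ₀ hℓ₀ => by rw [hsum ℓ₀ hℓ₀], Finset.sum_const,
    Finset.card_erase_of_mem (Finset.mem_univ _), Finset.card_univ, Fintype.card_fin] at key
  rw [probOverlapsWithFirstMem, key, probOverlapsWithFirstMem]
  simp only [zetaOv, χ, nsmul_eq_mul, Nat.add_sub_cancel]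
  field_simp
  ring

lemma probOverlapsWithFirstMem_eq [IsProbabilityMeasure ν] [IsMarkovKernel G]
    (hGG : SatisfiesGG ν G) {B : Set ℝ} (hB : MeasurableSet B) (n : ℕ) :
    probOverlapsWithFirstMem ν G B n = risingDivFactorial (zetaOv ν G B) n :=
  eq_risingDivFactorial_of_succ (probOverlapsWithFirstMem_zero ν G B)
    (probOverlapsWithFirstMem_succ ν G hGG hB) n

end Overlaps

theorem gg_overlap_neighborhood_bound_general
    (ν : Measure Θ) [IsProbabilityMeasure ν]
    (G : ProbabilityTheory.Kernel Θ H) [IsMarkovKernel G]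
    (hGG : SatisfiesGG ν G) (A : Set ℝ) (hA : MeasurableSet A)
    (n : ℕ) (hn : 2 ≤ n) :
    EG ν G (n + 1) (Set.indicator
        {σ | ∀ ℓ : Fin (n + 1), ℓ ≠ 0 → (inner ℝ (σ 0) (σ ℓ) : ℝ) ∈ Aᶜ}
        fun _ => (1 : ℝ)) =
      (∏ k ∈ Finset.range n, ((k : ℝ) + zetaOv ν G Aᶜ)) / (n.factorial : ℝ) ∧
    EG ν G (n + 1) (Set.indicator
        {σ | ∀ ℓ : Fin (n + 1), ℓ ≠ 0 → (inner ℝ (σ 0) (σ ℓ) : ℝ) ∈ Aᶜ}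
        fun _ => (1 : ℝ)) ≤
      zetaOv ν G Aᶜ * (1 + zetaOv ν G Aᶜ) / (n : ℝ) ^ (1 - zetaOv ν G Aᶜ) := by
  change probOverlapsWithFirstMem ν G Aᶜ n = risingDivFactorial (zetaOv ν G Aᶜ) n ∧
    probOverlapsWithFirstMem ν G Aᶜ n ≤ _
  rw [probOverlapsWithFirstMem_eq ν G hGG hA.compl n]
  exact ⟨rfl, risingDivFactorial_le_div_rpow (zetaOv_nonneg ν G Aᶜ) (by omega)⟩

/-- Under the Ghirlanda–Guerra identities, if `a = ζ(Aᶜ) < 1` then for `n ≥ 2`,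
`E⟨I(R_{1,ℓ} ∈ Aᶜ, 2 ≤ ℓ ≤ n+1)⟩ = a(1+a)⋯(n−1+a)/n! ≤ a(1+a)/n^{1−a}`. -/
theorem gg_overlap_neighborhood_bound
    (ν : Measure Θ) [IsProbabilityMeasure ν]
    (G : ProbabilityTheory.Kernel Θ H) [IsMarkovKernel G]
    (hGG : SatisfiesGG ν G) (A : Set ℝ) (hA : MeasurableSet A)
    (ha : zetaOv ν G Aᶜ < 1) (n : ℕ) (hn : 2 ≤ n) :
    EG ν G (n + 1) (Set.indicator
        {σ | ∀ ℓ : Fin (n + 1), ℓ ≠ 0 → (inner ℝ (σ 0) (σ ℓ) : ℝ) ∈ Aᶜ}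
        fun _ => (1 : ℝ)) =
      (∏ k ∈ Finset.range n, ((k : ℝ) + zetaOv ν G Aᶜ)) / (n.factorial : ℝ) ∧
    EG ν G (n + 1) (Set.indicator
        {σ | ∀ ℓ : Fin (n + 1), ℓ ≠ 0 → (inner ℝ (σ 0) (σ ℓ) : ℝ) ∈ Aᶜ}
        fun _ => (1 : ℝ)) ≤
      zetaOv ν G Aᶜ * (1 + zetaOv ν G Aᶜ) / (n : ℝ) ^ (1 - zetaOv ν G Aᶜ) :=
  gg_overlap_neighborhood_bound_general ν G hGG A hA n hn
end

section
/- Let n = 3m and let σ¹,...,σⁿ be points on the sphere of radius √q* in a Hilbert space, partitioned into three groups I₁, I₂, I₃ of size m, with pairwise overlaps σ^ℓ·σ^{ℓ'} ≤ c < q* for all ℓ ≠ ℓ', and cross-group overlaps equal to a between I₁ and I₂, b between I₁ and I₃, and c between I₂ and I₃, where a < b ≤ c. Then 0 < b − a ≤ 2√(2(q* − c)·q*/m), so such configurations cannot exist for all m; consequently no triple (a,b,c) with a < b ≤ c < q* violating ultrametricity is consistent with this duplication structure. -/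
/-!
Average each group. The barycenters `τⱼ` inherit the cross-group overlaps `a, b, c`, while the
within-group bound `c` gives `‖τⱼ‖² ≤ (q* + (m - 1) c) / m`. Since `⟪τ₁, τ₂⟫ = c`, this forces
`‖τ₂ - τ₁‖² ≤ 2 (q* - c) / m`, and Cauchy–Schwarz gives
`b - a = ⟪τ₀, τ₂ - τ₁⟫ ≤ ‖τ₀‖ ‖τ₂ - τ₁‖ ≤ √q* · √(2 (q* - c) / m)`.
-/

open Finset RealInnerProductSpace

section Barycenter

variable {H : Type*} [NormedAddCommGroup H] [InnerProductSpace ℝ H]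
  {ι κ : Type*} [Fintype ι] [Fintype κ]

noncomputable def barycenter (v : ι → H) : H := (Fintype.card ι : ℝ)⁻¹ • ∑ i, v i

lemma inner_barycenter_barycenter (v : ι → H) (w : κ → H) :
    ⟪barycenter v, barycenter w⟫ =
      (Fintype.card ι : ℝ)⁻¹ * (Fintype.card κ : ℝ)⁻¹ * ∑ i, ∑ j, ⟪v i, w j⟫ := by
  simp only [barycenter, real_inner_smul_left, real_inner_smul_right]
  rw [sum_inner]
  simp only [inner_sum]
  ring

lemma inner_barycenter_barycenter_of_forall_inner_eq [Nonempty ι] [Nonempty κ]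
    {v : ι → H} {w : κ → H} {r : ℝ} (h : ∀ i j, ⟪v i, w j⟫ = r) :
    ⟪barycenter v, barycenter w⟫ = r := by
  simp only [inner_barycenter_barycenter, h, sum_const, card_univ, nsmul_eq_mul]
  field_simp

lemma norm_barycenter_le [Nonempty ι] {v : ι → H} {R : ℝ} (h : ∀ i, ‖v i‖ ≤ R) :
    ‖barycenter v‖ ≤ R := by
  have hn : (0 : ℝ) < Fintype.card ι := Nat.cast_pos.2 Fintype.card_pos
  calc ‖barycenter v‖ ≤ (Fintype.card ι : ℝ)⁻¹ * ∑ i, ‖v i‖ := by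
        rw [barycenter, norm_smul, norm_inv, RCLike.norm_natCast]
        gcongr
        exact norm_sum_le _ _
    _ ≤ (Fintype.card ι : ℝ)⁻¹ * ∑ _i : ι, R := by gcongr; exact h _
    _ = R := by simp only [sum_const, card_univ, nsmul_eq_mul]; field_simp

lemma norm_barycenter_sq_le [Nonempty ι] {v : ι → H} {q c : ℝ} (hq : ∀ i, ‖v i‖ ^ 2 ≤ q)
    (hc : ∀ i j, i ≠ j → ⟪v i, v j⟫ ≤ c) :
    ‖barycenter v‖ ^ 2 ≤ (q + (Fintype.card ι - 1) * c) / Fintype.card ι := by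
  classical
  set n : ℝ := (Fintype.card ι : ℝ)
  have hn : 0 < n := Nat.cast_pos.2 Fintype.card_pos
  have hrow : ∀ i, ∑ j, ⟪v i, v j⟫ ≤ n * c + (q - c) := fun i => calc
    ∑ j, ⟪v i, v j⟫ ≤ ∑ j, (c + if i = j then q - c else 0) := by
      refine sum_le_sum fun j _ => ?_
      by_cases hij : i = j
      · subst hij; simpa [real_inner_self_eq_norm_sq] using hq i
      · simpa [hij] using hc i j hij
    _ = n * c + (q - c) := by simp [sum_add_distrib, n]
  calc ‖barycenter v‖ ^ 2 = n⁻¹ * n⁻¹ * ∑ i, ∑ j, ⟪v i, v j⟫ := by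
        rw [← real_inner_self_eq_norm_sq, inner_barycenter_barycenter]
    _ ≤ n⁻¹ * n⁻¹ * ∑ _i : ι, (n * c + (q - c)) := by gcongr with i; exact hrow i
    _ = (q + (n - 1) * c) / n := by
        simp only [sum_const, card_univ, nsmul_eq_mul]; field_simp; ring

end Barycenter

theorem ultrametricity_barycenter_estimate_general
    {H : Type} [NormedAddCommGroup H] [InnerProductSpace ℝ H]
    (m : ℕ) (hm : 0 < m) (qs a b c : ℝ)
    (σ : Fin 3 → Fin m → H)
    (hnorm : ∀ j i, ‖σ j i‖ ^ 2 = qs)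
    (hpair : ∀ (j j' : Fin 3) (i i' : Fin m),
      (j, i) ≠ (j', i') → (inner ℝ (σ j i) (σ j' i') : ℝ) ≤ c)
    (h12 : ∀ i i', (inner ℝ (σ 0 i) (σ 1 i') : ℝ) = a)
    (h13 : ∀ i i', (inner ℝ (σ 0 i) (σ 2 i') : ℝ) = b)
    (h23 : ∀ i i', (inner ℝ (σ 1 i) (σ 2 i') : ℝ) = c)
    (hab : a < b) :
    0 < b - a ∧ b - a ≤ 2 * Real.sqrt (2 * (qs - c) * qs / m) := by
  have : Nonempty (Fin m) := ⟨⟨0, hm⟩⟩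
  set τ : Fin 3 → H := fun j => barycenter (σ j)
  have hqs : 0 ≤ qs := hnorm 0 ⟨0, hm⟩ ▸ sq_nonneg _
  have hwithin : ∀ j, ‖τ j‖ ^ 2 ≤ (qs + (m - 1) * c) / m := by
    intro j
    simpa using norm_barycenter_sq_le (fun i => (hnorm j i).le)
      (fun i i' hii' => hpair j j i i' (by simpa using hii'))
  have hτ₀ : ‖τ 0‖ ≤ √qs :=
    norm_barycenter_le fun i => by rw [← hnorm 0 i, Real.sqrt_sq (norm_nonneg _)]
  have hτ₁₂ : ⟪τ 1, τ 2⟫ = c := inner_barycenter_barycenter_of_forall_inner_eq h23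
  have hclose : ‖τ 2 - τ 1‖ ^ 2 ≤ 2 * (qs - c) / m := by
    have hm' : (0 : ℝ) < m := Nat.cast_pos.2 hm
    rw [norm_sub_sq_real, real_inner_comm, hτ₁₂]
    have hsum : 2 * ((qs + (m - 1) * c) / m) - 2 * c = 2 * (qs - c) / m := by
      field_simp; ring
    linarith [hwithin 1, hwithin 2]
  refine ⟨sub_pos.2 hab, ?_⟩
  calc b - a = ⟪τ 0, τ 2 - τ 1⟫ := by
        rw [inner_sub_right, inner_barycenter_barycenter_of_forall_inner_eq h13,
          inner_barycenter_barycenter_of_forall_inner_eq h12]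
    _ ≤ ‖τ 0‖ * ‖τ 2 - τ 1‖ := real_inner_le_norm _ _
    _ ≤ √qs * √(2 * (qs - c) / m) := by gcongr; exact Real.le_sqrt_of_sq_le hclose
    _ = √(2 * (qs - c) * qs / m) := by rw [← Real.sqrt_mul hqs]; ring_nf
    _ ≤ 2 * √(2 * (qs - c) * qs / m) := le_mul_of_one_le_left (Real.sqrt_nonneg _) one_le_two

/-- Barycenter estimate in the proof of ultrametricity: if `3m` points on the
sphere `‖σ‖² = q*` in a Hilbert space split into three groups of size `m`, with all pairwise
overlaps `≤ c`, and cross-group overlaps equal to `a` (groups 1–2), `b` (groups 1–3) and `c`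
(groups 2–3), where `a < b ≤ c < q*`, then `0 < b − a ≤ 2√(2(q*−c)q*/m)`. -/
theorem ultrametricity_barycenter_estimate
    {H : Type} [NormedAddCommGroup H] [InnerProductSpace ℝ H]
    (m : ℕ) (hm : 0 < m) (qs a b c : ℝ)
    (σ : Fin 3 → Fin m → H)
    (hnorm : ∀ j i, ‖σ j i‖ ^ 2 = qs)
    (hpair : ∀ (j j' : Fin 3) (i i' : Fin m),
      (j, i) ≠ (j', i') → (inner ℝ (σ j i) (σ j' i') : ℝ) ≤ c)
    (h12 : ∀ i i', (inner ℝ (σ 0 i) (σ 1 i') : ℝ) = a)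
    (h13 : ∀ i i', (inner ℝ (σ 0 i) (σ 2 i') : ℝ) = b)
    (h23 : ∀ i i', (inner ℝ (σ 1 i) (σ 2 i') : ℝ) = c)
    (hab : a < b) (hbc : b ≤ c) (hc : c < qs) :
    0 < b - a ∧ b - a ≤ 2 * Real.sqrt (2 * (qs - c) * qs / m) :=
  ultrametricity_barycenter_estimate_general m hm qs a b c σ hnorm hpair h12 h13 h23 hab
end
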